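/- For every real number C, the function ξ ↦ 1/√(2C − log(ξ² − 1)) is integrable on the interval (1, √(1 + e^{2C})); that is, the integral ℓ_C := ∫_1^{√(1+e^{2C})} dξ/√(2C − log(ξ² − 1)) is finite. -/

import Mathlib

/-!
Writing `b = √(1 + e^{2C})`, the inequality `log y ≤ y - 1` applied to `y = (ξ² - 1)/e^{2C}` gives
`2C - log (ξ² - 1) ≥ (b² - ξ²)/e^{2C} ≥ 2 (b - ξ)/e^{2C}` on `(1, b)`, so the integrand is dominated
by a multiple of `(b - ξ)^{-1/2}`, which is integrable.
-/

open MeasureTheory Set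

theorem intervalIntegrable_sub_rpow {r : ℝ} (hr : -1 < r) (a b c : ℝ) :
    IntervalIntegrable (fun x => (c - x) ^ r) volume a b := by
  simpa using
    (intervalIntegral.intervalIntegrable_rpow' hr (a := c - a) (b := c - b)).comp_sub_left c

theorem one_div_sqrt_eq_rpow_neg_half {x : ℝ} (hx : 0 ≤ x) : 1 / √x = x ^ (-(1 / 2) : ℝ) := by
  rw [Real.rpow_neg hx, ← Real.sqrt_eq_rpow, one_div]

theorem integrableOn_one_div_sqrt_of_mul_sub_le {g : ℝ → ℝ} {a b c : ℝ} (hab : a ≤ b) (hc : 0 < c)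
    (hg : Measurable g) (hle : ∀ x ∈ Ioo a b, c * (b - x) ≤ g x) :
    IntegrableOn (fun x => 1 / √(g x)) (Ioo a b) := by
  have hdom : IntegrableOn (fun x => c ^ (-(1 / 2) : ℝ) * (b - x) ^ (-(1 / 2) : ℝ)) (Ioo a b) :=
    ((intervalIntegrable_iff_integrableOn_Ioo_of_le hab).1
      (intervalIntegrable_sub_rpow (by norm_num) a b b)).const_mul _
  refine hdom.mono' (measurable_const.div hg.sqrt).aestronglyMeasurable
    ((ae_restrict_iff' measurableSet_Ioo).2 (.of_forall fun x hx => ?_))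
  have hbx : 0 < b - x := sub_pos.2 hx.2
  calc ‖1 / √(g x)‖ = 1 / √(g x) := Real.norm_of_nonneg (by positivity)
    _ ≤ 1 / √(c * (b - x)) :=
        one_div_le_one_div_of_le (by positivity) (Real.sqrt_le_sqrt (hle x hx))
    _ = c ^ (-(1 / 2) : ℝ) * (b - x) ^ (-(1 / 2) : ℝ) := by
        rw [one_div_sqrt_eq_rpow_neg_half (by positivity), Real.mul_rpow hc.le hbx.le]

theorem one_sub_div_exp_le_sub_log (c : ℝ) {x : ℝ} (hx : 0 < x) :
    1 - x / Real.exp c ≤ c - Real.log x := by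
  have := Real.log_le_sub_one_of_pos (div_pos hx (Real.exp_pos c))
  rw [Real.log_div hx.ne' (Real.exp_pos c).ne', Real.log_exp] at this
  linarith

theorem family_head_integrand_integrable (C : ℝ) :
    IntegrableOn (fun ξ : ℝ => 1 / Real.sqrt (2 * C - Real.log (ξ ^ 2 - 1)))
      (Ioo 1 (Real.sqrt (1 + Real.exp (2 * C)))) := by
  set b := Real.sqrt (1 + Real.exp (2 * C))
  have hE : 0 < Real.exp (2 * C) := Real.exp_pos _
  have hb2 : b ^ 2 = 1 + Real.exp (2 * C) := Real.sq_sqrt (by positivity)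
  have hb1 : 1 ≤ b := Real.one_le_sqrt.2 (by linarith)
  refine integrableOn_one_div_sqrt_of_mul_sub_le hb1 (div_pos two_pos hE) (by fun_prop) ?_
  intro ξ ⟨hξ1, hξb⟩
  calc 2 / Real.exp (2 * C) * (b - ξ) ≤ (b ^ 2 - ξ ^ 2) / Real.exp (2 * C) := by
        rw [div_mul_eq_mul_div]; gcongr; nlinarith
    _ = 1 - (ξ ^ 2 - 1) / Real.exp (2 * C) := by field_simp; linarith
    _ ≤ 2 * C - Real.log (ξ ^ 2 - 1) := one_sub_div_exp_le_sub_log _ (by nlinarith)
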